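/- arXiv:1609.04057 — 5 statements merged into one kernel-verified Lean document; each statement's English description precedes it below -/
import Mathlib

section
/- Let λ > 0, σ > 0 and a ∈ ℝ with a ≠ 0, and set μ = λσ/|a|. The pushforward, under the map x ↦ 1/x from (0,∞) to (0,∞), of the Borel measure on (0,∞) with Lebesgue density x ↦ (λ/√(2π)) · exp(λ|a|/σ) · x^{−1/2} · exp(−λ²x/2 − a²/(2σ²x)) equals the Borel measure on (0,∞) with Lebesgue density z ↦ (λ/√(2π)) · z^{−3/2} · exp(−λ²(z−μ)²/(2μ²z)), i.e. the Inverse-Gaussian density with mean parameter μ and scale parameter λ². -/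
/-!
Substituting `z = 1/x` into the first density contributes the Jacobian factor `z⁻²`, which turns
`x^{-1/2}` into `z^{-3/2}`; completing the square shows that `λ|a|/σ - λ²x/2 - a²/(2σ²x)` is the
Inverse-Gaussian exponent `-λ²(z - μ)²/(2μ²z)` with `μ = λσ/|a|`.
-/

open MeasureTheory Real Set
open scoped ENNReal

theorem MeasureTheory.Measure.map_withDensity_comp {α β : Type*} [MeasurableSpace α]
    [MeasurableSpace β] (ν : Measure α) {f : α → β} (hf : Measurable f) {g : β → ℝ≥0∞}
    (hg : Measurable g) :
    (ν.withDensity (g ∘ f)).map f = (ν.map f).withDensity g := by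
  ext t ht
  rw [Measure.map_apply hf ht, withDensity_apply _ (hf ht), withDensity_apply _ ht,
    setLIntegral_map ht hg hf]
  rfl

theorem ofReal_ite_pos_eq_indicator (p : ℝ → ℝ) :
    (fun x => ENNReal.ofReal (if 0 < x then p x else 0))
      = (Ioi 0).indicator fun x => ENNReal.ofReal (p x) := by
  ext x
  by_cases hx : 0 < x <;> simp [hx]

theorem measurable_one_div_real : Measurable fun x : ℝ => 1 / x := by
  simpa only [one_div] using measurable_inv

theorem map_one_div_restrict_Ioi_withDensity_inv_sq :
    ((volume.restrict (Ioi (0 : ℝ))).withDensity fun x => ENNReal.ofReal (x ^ 2)⁻¹).map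
      (fun x => 1 / x) = volume.restrict (Ioi 0) := by
  have hderiv : ∀ x ∈ Ioi (0 : ℝ), HasFDerivWithinAt (fun x : ℝ => 1 / x)
      (ContinuousLinearMap.toSpanSingleton ℝ (-(x ^ 2)⁻¹)) (Ioi 0) x := fun x hx => by
    simpa only [one_div] using
      (hasDerivAt_inv (ne_of_gt hx)).hasDerivWithinAt.hasFDerivWithinAt
  have hinj : InjOn (fun x : ℝ => 1 / x) (Ioi 0) := fun x _ y _ h => by
    simpa only [one_div, inv_inj] using h
  have himage : (fun x : ℝ => 1 / x) '' Ioi 0 = Ioi 0 := by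
    ext z
    simp only [one_div, image_inv_eq_inv, mem_inv, mem_Ioi, inv_pos]
  have h := map_withDensity_abs_det_fderiv_eq_addHaar volume
    measurableSet_Ioi.nullMeasurableSet hderiv hinj
  simpa only [ContinuousLinearMap.det_toSpanSingleton, abs_neg, abs_inv, abs_pow, sq_abs,
    himage] using h

theorem map_one_div_restrict_Ioi_withDensity {f g : ℝ → ℝ≥0∞} (hg : Measurable g)
    (hfg : ∀ x > 0, f x = ENNReal.ofReal (x ^ 2)⁻¹ * g (1 / x)) :
    ((volume.restrict (Ioi (0 : ℝ))).withDensity f).map (fun x => 1 / x)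
      = (volume.restrict (Ioi 0)).withDensity g := by
  have hf : f =ᵐ[volume.restrict (Ioi 0)]
      (fun x => ENNReal.ofReal (x ^ 2)⁻¹) * (g ∘ fun x => 1 / x) :=
    (ae_restrict_iff' measurableSet_Ioi).2 (ae_of_all _ hfg)
  rw [withDensity_congr_ae hf, withDensity_mul _ (by fun_prop) (hg.comp measurable_one_div_real),
    Measure.map_withDensity_comp _ measurable_one_div_real hg,
    map_one_div_restrict_Ioi_withDensity_inv_sq]

theorem rpow_neg_one_half_eq_inv_sq_mul_one_div_rpow {x : ℝ} (hx : 0 < x) :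
    x ^ (-(1 : ℝ) / 2) = (x ^ 2)⁻¹ * (1 / x) ^ (-(3 : ℝ) / 2) := by
  rw [one_div, inv_rpow hx.le, ← rpow_neg hx.le, ← rpow_natCast, ← rpow_neg hx.le,
    ← rpow_add hx]
  norm_num

theorem inverseGaussian_exponent_one_div {lam σ b x : ℝ} (hlam : lam ≠ 0) (hσ : σ ≠ 0)
    (hb : b ≠ 0) (hx : x ≠ 0) :
    -(lam ^ 2 * (1 / x - lam * σ / b) ^ 2) / (2 * (lam * σ / b) ^ 2 * (1 / x))
      = lam * b / σ + (-(lam ^ 2 * x) / 2 - b ^ 2 / (2 * σ ^ 2 * x)) := by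
  field_simp
  ring

/-- the pushforward under `x ↦ 1/x` of the measure on `(0,∞)` with density
`x ↦ (λ/√(2π)) exp(λ|a|/σ) x^{−1/2} exp(−λ²x/2 − a²/(2σ²x))` is the Inverse-Gaussian
measure with mean parameter `μ = λσ/|a|` and scale parameter `λ²`, i.e. the measure with
density `z ↦ (λ/√(2π)) z^{−3/2} exp(−λ²(z−μ)²/(2μ²z))` on `(0,∞)`. -/
theorem map_inv_recip_inverseGaussian (lam σ a : ℝ) (hlam : 0 < lam) (hσ : 0 < σ)
    (ha : a ≠ 0) :
    Measure.map (fun x : ℝ => 1 / x)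
      ((volume : Measure ℝ).withDensity (fun x => ENNReal.ofReal
        (if 0 < x then
          lam / Real.sqrt (2 * π) * Real.exp (lam * |a| / σ) * x ^ (-(1 : ℝ) / 2) *
            Real.exp (-(lam ^ 2 * x) / 2 - a ^ 2 / (2 * σ ^ 2 * x))
        else 0)))
    = (volume : Measure ℝ).withDensity (fun z => ENNReal.ofReal
        (if 0 < z then
          lam / Real.sqrt (2 * π) * z ^ (-(3 : ℝ) / 2) *
            Real.exp (-(lam ^ 2 * (z - lam * σ / |a|) ^ 2) /
              (2 * (lam * σ / |a|) ^ 2 * z))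
        else 0)) := by
  simp only [ofReal_ite_pos_eq_indicator, withDensity_indicator measurableSet_Ioi]
  refine map_one_div_restrict_Ioi_withDensity (by fun_prop) fun x hx => ?_
  rw [← ENNReal.ofReal_mul (by positivity), rpow_neg_one_half_eq_inv_sq_mul_one_div_rpow hx,
    inverseGaussian_exponent_one_div hlam.ne' hσ.ne' (abs_ne_zero.2 ha) hx.ne', sq_abs, exp_add]
  ring_nf
end

section
/- Let p ≥ 2, τ² = (τ²₁,…,τ²_p) ∈ (0,∞)ᵖ and w² = (w²₁,…,w²_{p−1}) ∈ (0,∞)^{p−1}. Then det(Σ⁻¹_{τ,w}) ≥ ∏_{i=1}^p 1/(2τ²ᵢ). -/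
/-!
`Σ⁻¹_{τ,w}` is `diag(1/τ²)` plus the weighted Laplacian of the path graph,
`∑ₖ w_k⁻² (e_{k+1} - e_k)(e_{k+1} - e_k)ᵀ`, which is positive semidefinite. Adding a positive
semidefinite `B` to a positive definite `A` cannot decrease the determinant, because
`det (A + B) = det A · det (1 + A^{-1/2} B A^{-1/2})` and the last matrix has all eigenvalues `≥ 1`.
Hence `det Σ⁻¹_{τ,w} ≥ ∏ 1/τᵢ² ≥ ∏ 1/(2τᵢ²)`.
-/

open Matrix

/-- The fused lasso precision matrix `Σ⁻¹_{τ,w}`: the symmetric tridiagonal `p×p` matrix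
with diagonal entries `1/τ₁ + 1/w₁` at `(0,0)`, `1/τᵢ + 1/w_{i−1} + 1/wᵢ` at interior
`(i,i)`, `1/τ_p + 1/w_{p−1}` at `(p−1,p−1)`, and entries `−1/wᵢ` at `(i,i+1)` and
`(i+1,i)`.  (Here `τ i` plays the role of `τ²_{i+1}` and `w i` of `w²_{i+1}`.) -/
noncomputable def fusedPrec (p : ℕ) (τ : Fin p → ℝ) (w : Fin (p - 1) → ℝ) :
    Matrix (Fin p) (Fin p) ℝ := fun i j =>
  if i = j then
    (τ i)⁻¹
      + (if h : (i : ℕ) < p - 1 then (w ⟨i, h⟩)⁻¹ else 0)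
      + (if h : 0 < (i : ℕ) ∧ (i : ℕ) - 1 < p - 1 then (w ⟨(i : ℕ) - 1, h.2⟩)⁻¹ else 0)
  else if h : (j : ℕ) = (i : ℕ) + 1 ∧ (i : ℕ) < p - 1 then -(w ⟨i, h.2⟩)⁻¹
  else if h : (i : ℕ) = (j : ℕ) + 1 ∧ (j : ℕ) < p - 1 then -(w ⟨j, h.2⟩)⁻¹
  else 0

namespace Matrix

variable {n : Type*} [Fintype n] [DecidableEq n]

theorem PosSemidef.one_le_det_one_add {M : Matrix n n ℝ} (hM : M.PosSemidef) :
    1 ≤ (1 + M).det := by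
  set U := hM.1.eigenvectorUnitary
  have hU : (U : Matrix n n ℝ) * (star U : Matrix n n ℝ) = 1 := Unitary.coe_mul_star_self U
  have hdiag :
      1 + M = U * diagonal (fun i => 1 + hM.1.eigenvalues i) * (star U : Matrix n n ℝ) := by
    rw [← diagonal_add, diagonal_one, mul_add, add_mul, mul_one, hU]
    exact congrArg _ hM.1.spectral_theorem
  rw [hdiag, det_mul_right_comm, hU, one_mul, det_diagonal]
  exact Finset.one_le_prod fun i _ => le_add_of_nonneg_right (hM.eigenvalues_nonneg i)

open scoped MatrixOrder in
theorem PosDef.det_le_det_add {A B : Matrix n n ℝ} (hA : A.PosDef) (hB : B.PosSemidef) :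
    A.det ≤ (A + B).det := by
  set S := CFC.sqrt A
  have hSS : S * S = A := CFC.sqrt_mul_sqrt_self A hA.posSemidef.nonneg
  have hS : Sᴴ = S := (CFC.sqrt_nonneg A).posSemidef.1.eq
  have hdetS : IsUnit S.det := by
    refine isUnit_iff_ne_zero.mpr fun h => hA.det_pos.ne' ?_
    rw [← hSS, det_mul, h, zero_mul]
  have hconj : (S⁻¹ * B * S⁻¹).PosSemidef := by
    simpa only [conjTranspose_nonsing_inv, hS] using hB.mul_mul_conjTranspose_same S⁻¹
  have hfactor : A + B = S * (1 + S⁻¹ * B * S⁻¹) * S := by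
    rw [mul_add, add_mul, mul_one, hSS, ← mul_assoc, ← mul_assoc, mul_nonsing_inv _ hdetS,
      one_mul, mul_assoc, nonsing_inv_mul _ hdetS, mul_one]
  calc A.det = S.det * S.det * 1 := by rw [mul_one, ← det_mul, hSS]
    _ ≤ S.det * S.det * (1 + S⁻¹ * B * S⁻¹).det :=
      mul_le_mul_of_nonneg_left hconj.one_le_det_one_add (mul_self_nonneg _)
    _ = (A + B).det := by rw [hfactor, det_mul, det_mul]; ring

end Matrix

theorem Fin.sum_ite_val_eq {M : Type*} [AddCommMonoid M] {n : ℕ} (c : ℕ) (f : Fin n → M) :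
    (∑ k : Fin n, if (k : ℕ) = c then f k else 0) = if h : c < n then f ⟨c, h⟩ else 0 := by
  split_ifs with h
  · simpa [← Fin.val_inj] using Finset.sum_ite_eq' Finset.univ (⟨c, h⟩ : Fin n) f
  · exact Finset.sum_eq_zero fun k _ => if_neg (by omega)

theorem Fin.sum_ite_val_add_one_eq {M : Type*} [AddCommMonoid M] {n : ℕ} (c : ℕ)
    (f : Fin n → M) :
    (∑ k : Fin n, if (k : ℕ) + 1 = c then f k else 0)
      = if h : 0 < c ∧ c - 1 < n then f ⟨c - 1, h.2⟩ else 0 := by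
  by_cases hc : 0 < c
  · simp only [show ∀ k : ℕ, k + 1 = c ↔ k = c - 1 by omega, Fin.sum_ite_val_eq, hc, true_and]
  · rw [dif_neg (by omega)]
    exact Finset.sum_eq_zero fun k _ => if_neg (by omega)

noncomputable def pathIncidence (p : ℕ) (k : Fin (p - 1)) : Fin p → ℝ :=
  fun i => if (i : ℕ) = k + 1 then 1 else if (i : ℕ) = k then -1 else 0

theorem fusedPrec_eq_diagonal_add_sum (p : ℕ) (τ : Fin p → ℝ) (w : Fin (p - 1) → ℝ) :
    fusedPrec p τ w = diagonal (fun i => (τ i)⁻¹)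
      + ∑ k, (w k)⁻¹ • vecMulVec (pathIncidence p k) (pathIncidence p k) := by
  ext i j
  -- edge `k`'s entry, split into cases exactly as in the definition of `fusedPrec`
  have hedge : ∀ k, ((w k)⁻¹ • vecMulVec (pathIncidence p k) (pathIncidence p k)) i j =
      if i = j then
        (if (k : ℕ) = i then (w k)⁻¹ else 0) + (if (k : ℕ) + 1 = i then (w k)⁻¹ else 0)
      else if (j : ℕ) = i + 1 then -(if (k : ℕ) = i then (w k)⁻¹ else 0)
      else if (i : ℕ) = j + 1 then -(if (k : ℕ) = j then (w k)⁻¹ else 0) else 0 := by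
    intro k
    simp only [Matrix.smul_apply, vecMulVec_apply, pathIncidence, smul_eq_mul, ← Fin.val_inj]
    split_ifs <;> first | ring1 | (exfalso; omega)
  simp only [Matrix.add_apply, Matrix.sum_apply, hedge, Finset.sum_ite_irrel,
    Finset.sum_const_zero, Finset.sum_add_distrib, Finset.sum_neg_distrib, Fin.sum_ite_val_eq,
    Fin.sum_ite_val_add_one_eq, diagonal_apply, fusedPrec]
  split_ifs <;> first | ring1 | (exfalso; omega)

theorem fusedPrec_det_lower_bound_general (p : ℕ) (τ : Fin p → ℝ)
    (w : Fin (p - 1) → ℝ) (hτ : ∀ i, 0 < τ i) (hw : ∀ i, 0 < w i) :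
    (∏ i, (2 * τ i)⁻¹) ≤ (fusedPrec p τ w).det := by
  have hdiag : (diagonal fun i => (τ i)⁻¹).PosDef :=
    posDef_diagonal_iff.mpr fun i => inv_pos.mpr (hτ i)
  have hlap : (∑ k, (w k)⁻¹ • vecMulVec (pathIncidence p k) (pathIncidence p k)).PosSemidef :=
    posSemidef_sum _ fun k _ =>
      (posSemidef_vecMulVec_self_star (pathIncidence p k)).smul (inv_nonneg.mpr (hw k).le)
  calc (∏ i, (2 * τ i)⁻¹) ≤ ∏ i, (τ i)⁻¹ :=
        Finset.prod_le_prod (fun i _ => by have := hτ i; positivity) fun i _ =>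
          inv_anti₀ (hτ i) (by linarith [hτ i])
    _ = (diagonal fun i => (τ i)⁻¹).det := det_diagonal.symm
    _ ≤ (fusedPrec p τ w).det := by
      rw [fusedPrec_eq_diagonal_add_sum]
      exact hdiag.det_le_det_add hlap

/-- `det(Σ⁻¹_{τ,w}) ≥ ∏_{i=1}^p 1/(2τ²ᵢ)`. -/
theorem fusedPrec_det_lower_bound (p : ℕ) (hp : 2 ≤ p) (τ : Fin p → ℝ)
    (w : Fin (p - 1) → ℝ) (hτ : ∀ i, 0 < τ i) (hw : ∀ i, 0 < w i) :
    (∏ i, (2 * τ i)⁻¹) ≤ (fusedPrec p τ w).det :=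
  fusedPrec_det_lower_bound_general p τ w hτ hw
end

section
/- Let λ > 0, σ > 0 and a ∈ ℝ. Then ∫₀^∞ x^{−1/2} exp(−λ²x/2 − a²/(2σ²x)) dx = (√(2π)/λ) · exp(−λ|a|/σ). -/
open Real MeasureTheory Set

/-! After the substitution `x = t ^ 2`, completing the square turns the integrand into
`2 * exp (-λ|a|/σ) * exp (-(λ²/2) (t - c/t)²)` with `c = |a| / (λσ)`. The Cauchy–Schlömilch
substitution `u = t - c/t` maps `(0, ∞)` bijectively onto `ℝ` with `du = (1 + c/t²) dt`, and the
reflection `t ↦ c/t` shows that the `c/t²` part contributes as much as the `1` part; so for an even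
integrable `f`, `∫₀^∞ f (t - c/t) dt = ½ ∫ f`, which reduces the claim to the Gaussian integral. -/

section CauchySchlomilch

variable {E : Type*} [NormedAddCommGroup E] [NormedSpace ℝ E] {c : ℝ}

lemma hasDerivAt_const_div (c : ℝ) {t : ℝ} (ht : t ≠ 0) :
    HasDerivAt (fun s => c / s) (-(c / t ^ 2)) t := by
  simpa [div_eq_mul_inv] using (hasDerivAt_inv ht).const_mul c

lemma hasDerivAt_sub_const_div (c : ℝ) {t : ℝ} (ht : t ≠ 0) :
    HasDerivAt (fun s => s - c / s) (1 + c / t ^ 2) t :=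
  ((hasDerivAt_id' t).sub (hasDerivAt_const_div c ht)).congr_deriv (sub_neg_eq_add _ _)

lemma image_const_div_Ioi (hc : 0 < c) : (fun t => c / t) '' Ioi 0 = Ioi 0 := by
  refine Subset.antisymm (image_subset_iff.2 fun t ht => div_pos hc ht) fun x hx => ?_
  exact ⟨c / x, div_pos hc hx, div_div_cancel₀ hc.ne'⟩

lemma image_sub_const_div_Ioi (hc : 0 < c) : (fun t => t - c / t) '' Ioi 0 = univ := by
  refine eq_univ_of_forall fun u => ?_
  -- the positive root of `t ^ 2 - u * t - c = 0`
  set s := √(u ^ 2 + 4 * c)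
  have hs : s ^ 2 = u ^ 2 + 4 * c := sq_sqrt (by positivity)
  have hus : |u| < s := abs_lt_of_sq_lt_sq (by linarith) (sqrt_nonneg _)
  have ht : 0 < (u + s) / 2 := by linarith [neg_abs_le u]
  refine ⟨(u + s) / 2, ht, ?_⟩
  have : c / ((u + s) / 2) = (s - u) / 2 := by
    rw [div_eq_iff ht.ne']; linear_combination -hs / 4
  simp only [this]; ring

lemma strictMonoOn_sub_const_div (hc : 0 ≤ c) : StrictMonoOn (fun t => t - c / t) (Ioi 0) :=
  fun x hx y _ hxy => by
    linarith [div_le_div_of_nonneg_left hc (show 0 < x from hx) hxy.le]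

lemma integral_Ioi_comp_const_div (hc : 0 < c) (g : ℝ → E) :
    ∫ t in Ioi 0, (c / t ^ 2) • g (c / t) = ∫ t in Ioi 0, g t := by
  conv_rhs => rw [← image_const_div_Ioi hc]
  rw [integral_image_eq_integral_abs_deriv_smul measurableSet_Ioi
    (fun t ht => (hasDerivAt_const_div c (ne_of_gt ht)).hasDerivWithinAt)
    (Function.Involutive.injective (f := (c / ·)) (fun _ => div_div_cancel₀ hc.ne')).injOn]
  refine setIntegral_congr_fun measurableSet_Ioi fun t (ht : 0 < t) => ?_
  rw [abs_neg, abs_of_pos (by positivity)]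

lemma abs_one_add_div_sq (hc : 0 ≤ c) (t : ℝ) : |1 + c / t ^ 2| = 1 + c / t ^ 2 :=
  abs_of_nonneg (by positivity)

lemma integral_comp_sub_const_div (hc : 0 < c) (f : ℝ → E) :
    ∫ t in Ioi 0, (1 + c / t ^ 2) • f (t - c / t) = ∫ u, f u := by
  conv_rhs => rw [← setIntegral_univ, ← image_sub_const_div_Ioi hc]
  rw [integral_image_eq_integral_abs_deriv_smul
    measurableSet_Ioi (fun t ht => (hasDerivAt_sub_const_div c (ne_of_gt ht)).hasDerivWithinAt)
    (strictMonoOn_sub_const_div hc.le).injOn]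
  simp only [abs_one_add_div_sq hc.le]

lemma integrableOn_comp_sub_const_div_iff (hc : 0 < c) (f : ℝ → E) :
    IntegrableOn (fun t => (1 + c / t ^ 2) • f (t - c / t)) (Ioi 0) ↔ Integrable f := by
  conv_rhs => rw [← integrableOn_univ, ← image_sub_const_div_Ioi hc]
  rw [integrableOn_image_iff_integrableOn_abs_deriv_smul measurableSet_Ioi
      (fun t ht => (hasDerivAt_sub_const_div c (ne_of_gt ht)).hasDerivWithinAt)
      (strictMonoOn_sub_const_div hc.le).injOn]
  simp only [abs_one_add_div_sq hc.le]

lemma integrableOn_comp_sub_const_div (hc : 0 < c) {f : ℝ → E} (hf : Integrable f) :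
    IntegrableOn (fun t => f (t - c / t)) (Ioi 0) := by
  have hbound : ∀ t : ℝ, ‖(1 + c / t ^ 2)⁻¹‖ ≤ 1 := fun t => by
    rw [norm_inv, Real.norm_eq_abs, abs_one_add_div_sq hc.le]
    exact inv_le_one_of_one_le₀ (le_add_of_nonneg_right (by positivity))
  refine IntegrableOn.congr_fun (((integrableOn_comp_sub_const_div_iff hc f).2 hf).bdd_smul 1
    (by fun_prop : Measurable _).aestronglyMeasurable (ae_of_all _ hbound)) (fun t _ => ?_)
    measurableSet_Ioi
  simp only [Pi.smul_apply', smul_smul]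
  rw [inv_mul_cancel₀ (by positivity), one_smul]

theorem integral_Ioi_comp_sub_const_div_of_even (hc : 0 < c) {f : ℝ → E} (hf : Integrable f)
    (heven : ∀ u, f (-u) = f u) :
    ∫ t in Ioi 0, f (t - c / t) = (2 : ℝ)⁻¹ • ∫ u, f u := by
  set F := fun t => f (t - c / t)
  have hF : IntegrableOn F (Ioi 0) := integrableOn_comp_sub_const_div hc hf
  have hJ := (integrableOn_comp_sub_const_div_iff hc f).2 hf
  have hG : IntegrableOn (fun t => (c / t ^ 2) • F t) (Ioi 0) :=
    (hJ.sub hF).congr_fun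
      (fun t _ => by simp only [Pi.sub_apply, F, add_smul, one_smul, add_sub_cancel_left])
      measurableSet_Ioi
  -- `t ↦ c / t` swaps the two branches `t - c / t` and `c / t - t` of the substitution
  have hreflect : ∫ t in Ioi 0, (c / t ^ 2) • F t = ∫ t in Ioi 0, F t := by
    rw [← integral_Ioi_comp_const_div hc F]
    refine setIntegral_congr_fun measurableSet_Ioi fun t _ => ?_
    simp only [F, div_div_cancel₀ hc.ne', ← heven (t - c / t), neg_sub]
  have : (2 : ℝ) • ∫ t in Ioi 0, F t = ∫ u, f u := by
    rw [← integral_comp_sub_const_div hc f, two_smul]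
    nth_rewrite 2 [← hreflect]
    rw [← integral_add hF hG]
    exact setIntegral_congr_fun measurableSet_Ioi fun t _ => by simp only [F, add_smul, one_smul]
  rw [← this, smul_smul, inv_mul_cancel₀ two_ne_zero, one_smul]

end CauchySchlomilch

lemma integral_Ioi_exp_neg_mul_sq_sub_div {p c : ℝ} (hp : 0 < p) (hc : 0 ≤ c) :
    ∫ t in Ioi 0, exp (-p * (t - c / t) ^ 2) = √(π / p) / 2 := by
  rcases hc.eq_or_lt with rfl | hc
  · simpa using integral_gaussian_Ioi p
  rw [integral_Ioi_comp_sub_const_div_of_even hc (f := fun u => exp (-p * u ^ 2))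
    (integrable_exp_neg_mul_sq hp) (fun u => by simp only [neg_sq]), integral_gaussian,
    smul_eq_mul, inv_mul_eq_div]

lemma integral_Ioi_rpow_neg_half_mul (g : ℝ → ℝ) :
    ∫ x in Ioi 0, x ^ (-(1 : ℝ) / 2) * g x = 2 * ∫ t in Ioi 0, g (t ^ 2) := by
  rw [← integral_comp_rpow_Ioi_of_pos two_pos, ← integral_const_mul]
  refine setIntegral_congr_fun measurableSet_Ioi fun t (ht : 0 < t) => ?_
  rw [smul_eq_mul, ← rpow_mul ht.le, rpow_two]
  norm_num [rpow_neg_one]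
  field_simp

/-- `∫₀^∞ x^{−1/2} exp(−λ²x/2 − a²/(2σ²x)) dx = (√(2π)/λ) exp(−λ|a|/σ)`. -/
theorem integral_invGaussian_reciprocal_kernel (lam σ a : ℝ) (hlam : 0 < lam)
    (hσ : 0 < σ) :
    ∫ x in Set.Ioi (0 : ℝ),
        x ^ (-(1 : ℝ) / 2) * Real.exp (-(lam ^ 2 * x) / 2 - a ^ 2 / (2 * σ ^ 2 * x))
      = Real.sqrt (2 * π) / lam * Real.exp (-(lam * |a|) / σ) := by
  set c := |a| / (lam * σ) with hc_def
  have hsquare : ∀ t ∈ Ioi (0 : ℝ),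
      exp (-(lam ^ 2 * t ^ 2) / 2 - a ^ 2 / (2 * σ ^ 2 * t ^ 2))
        = exp (-(lam * |a|) / σ) * exp (-(lam ^ 2 / 2) * (t - c / t) ^ 2) := by
    intro t (ht : 0 < t)
    rw [← exp_add, ← sq_abs a, hc_def]
    congr 1
    field_simp
    ring
  have hsqrt : √(π / (lam ^ 2 / 2)) = √(2 * π) / lam := by
    rw [div_div_eq_mul_div, mul_comm, sqrt_div' _ (sq_nonneg lam), sqrt_sq hlam.le]
  rw [integral_Ioi_rpow_neg_half_mul, setIntegral_congr_fun measurableSet_Ioi hsquare,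
    integral_const_mul, integral_Ioi_exp_neg_mul_sq_sub_div (by positivity) (by positivity), hsqrt]
  ring
end

section
/- Let p ≥ 2, λ₁, λ₂ > 0, σ > 0 and β ∈ ℝᵖ. Then the integral over (τ², w²) ∈ (0,∞)ᵖ × (0,∞)^{p−1} of (2πσ²)^{−p/2} · det(Σ⁻¹_{τ,w})^{1/2} · exp(−βᵀΣ⁻¹_{τ,w}β/(2σ²)) · det(Σ⁻¹_{τ,w})^{−1/2} · (∏_{i=1}^p (τ²ᵢ)^{−1/2} exp(−λ₁² τ²ᵢ/2)) · (∏_{i=1}^{p−1} (w²ᵢ)^{−1/2} exp(−λ₂² w²ᵢ/2)) equals (2πσ²)^{−p/2} · (√(2π)/λ₁)^p · (√(2π)/λ₂)^{p−1} · exp(−(λ₁/σ)∑_{i=1}^p |βᵢ| − (λ₂/σ)∑_{i=1}^{p−1} |β_{i+1} − βᵢ|). Consequently, the marginal prior density of β given σ² in the Bayesian fused lasso model is proportional to exp(−(λ₁/σ)∑|βᵢ| − (λ₂/σ)∑|β_{i+1} − βᵢ|). -/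
open Matrix MeasureTheory Real

/-!
The quadratic form of `Σ⁻¹_{τ,w}` is `∑ βᵢ² / τᵢ + ∑ (β_{j+1} - β_j)² / w_j`; in particular the
matrix is positive definite, so the two determinant factors cancel and the integrand factorises
into one-dimensional integrals over `(0, ∞)`. Each of them is the representation of the Laplace
law as a normal scale mixture,
`∫₀^∞ t^{-1/2} exp (-c² / (2σ²t) - λ²t / 2) dt = (√(2π) / λ) exp (-λ|c| / σ)`,
which the substitution `t = x²` reduces to the Cauchy–Schlömilch integral
`∫₀^∞ exp (-(r x - s / x)²) dx = √π / (2r)`.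
-/

open Set

lemma integral_Ioi_div_sq_smul_comp_div {E : Type*} [NormedAddCommGroup E] [NormedSpace ℝ E]
    (g : ℝ → E) {c : ℝ} (hc : 0 < c) :
    ∫ x in Ioi 0, (c / x ^ 2) • g (c / x) = ∫ x in Ioi 0, g x := by
  have himage : (fun x => c / x) '' Ioi 0 = Ioi 0 := by
    refine Subset.antisymm (image_subset_iff.2 fun x hx => div_pos hc hx) fun y hy => ?_
    exact ⟨c / y, div_pos hc hy, div_div_cancel₀ hc.ne'⟩
  have hderiv : ∀ x ∈ Ioi (0 : ℝ), HasDerivWithinAt (fun x => c / x) (-(c / x ^ 2)) (Ioi 0) x :=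
    fun x hx => by
      simpa [div_eq_mul_inv] using ((hasDerivAt_inv (ne_of_gt hx)).const_mul c).hasDerivWithinAt
  have hinj : InjOn (fun x => c / x) (Ioi 0) := fun x _ y _ h => by
    simpa [div_eq_mul_inv, hc.ne'] using h
  have := integral_image_eq_integral_abs_deriv_smul measurableSet_Ioi hderiv hinj g
  rw [himage] at this
  rw [this]
  refine setIntegral_congr_fun measurableSet_Ioi fun x hx => ?_
  simp only [abs_neg, abs_of_pos (div_pos hc (pow_pos hx 2))]

section CauchySchlomilch

variable {r s : ℝ}

lemma strictMonoOn_mul_sub_div (hr : 0 < r) (hs : 0 ≤ s) :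
    StrictMonoOn (fun x => r * x - s / x) (Ioi 0) := fun x hx y _ hxy => by
  have : s / y ≤ s / x := div_le_div_of_nonneg_left hs hx hxy.le
  dsimp only
  nlinarith

lemma image_mul_sub_div_Ioi (hr : 0 < r) (hs : 0 < s) :
    (fun x => r * x - s / x) '' Ioi 0 = univ := by
  refine eq_univ_of_forall fun v => ?_
  -- the positive root of `r x² - v x - s = 0`
  set D := √(v ^ 2 + 4 * r * s)
  have hD : D ^ 2 = v ^ 2 + 4 * r * s := sq_sqrt (by positivity)
  have hvD : |v| < D := abs_lt_of_sq_lt_sq (by nlinarith) (sqrt_nonneg _)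
  have hvD_pos : 0 < v + D := by linarith [neg_abs_le v]
  refine ⟨(v + D) / (2 * r), div_pos hvD_pos (by positivity), ?_⟩
  field_simp
  nlinarith

lemma hasDerivAt_mul_sub_div {x : ℝ} (hx : x ≠ 0) :
    HasDerivAt (fun x => r * x - s / x) (r + s / x ^ 2) x := by
  simpa [div_eq_mul_inv] using
    ((hasDerivAt_id x).const_mul r).fun_sub ((hasDerivAt_inv hx).const_mul s)

lemma hasDerivWithinAt_mul_sub_div_Ioi :
    ∀ x ∈ Ioi (0 : ℝ), HasDerivWithinAt (fun x => r * x - s / x) (r + s / x ^ 2) (Ioi 0) x :=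
  fun _ hx => (hasDerivAt_mul_sub_div (ne_of_gt hx)).hasDerivWithinAt

lemma integrableOn_Ioi_deriv_mul_comp_mul_sub_div (hr : 0 < r) (hs : 0 < s) {g : ℝ → ℝ}
    (hg : Integrable g) :
    IntegrableOn (fun x => (r + s / x ^ 2) * g (r * x - s / x)) (Ioi 0) := by
  have := (integrableOn_image_iff_integrableOn_abs_deriv_smul measurableSet_Ioi
    hasDerivWithinAt_mul_sub_div_Ioi (strictMonoOn_mul_sub_div hr hs.le).injOn g).1
    (by rwa [image_mul_sub_div_Ioi hr hs, integrableOn_univ])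
  refine this.congr_fun (fun x _ => ?_) measurableSet_Ioi
  dsimp only
  rw [smul_eq_mul, abs_of_pos (by positivity)]

lemma integral_Ioi_deriv_mul_comp_mul_sub_div (hr : 0 < r) (hs : 0 < s) (g : ℝ → ℝ) :
    ∫ x in Ioi 0, (r + s / x ^ 2) * g (r * x - s / x) = ∫ v, g v := by
  have := integral_image_eq_integral_abs_deriv_smul measurableSet_Ioi
    hasDerivWithinAt_mul_sub_div_Ioi (strictMonoOn_mul_sub_div hr hs.le).injOn g
  rw [image_mul_sub_div_Ioi hr hs, setIntegral_univ] at this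
  rw [this]
  refine setIntegral_congr_fun measurableSet_Ioi fun x _ => ?_
  rw [smul_eq_mul, abs_of_pos (by positivity)]

/-- Cauchy–Schlömilch: the substitution `x ↦ s / (r x)` swaps the two halves of the Jacobian
`r + s / x²` of `x ↦ r x - s / x`, which maps `(0, ∞)` onto `ℝ`. -/
theorem integral_Ioi_exp_neg_sq_mul_sub_div (hr : 0 < r) (hs : 0 ≤ s) :
    ∫ x in Ioi 0, exp (-(r * x - s / x) ^ 2) = √π / (2 * r) := by
  rcases hs.eq_or_lt with rfl | hs
  · simp_rw [zero_div, sub_zero, mul_pow, neg_mul_eq_neg_mul]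
    rw [integral_gaussian_Ioi, sqrt_div pi_pos.le, sqrt_sq hr.le]
    ring
  set φ : ℝ → ℝ := fun x => exp (-(r * x - s / x) ^ 2)
  have hgauss : Integrable fun v : ℝ => exp (-v ^ 2) := by
    simpa using integrable_exp_neg_mul_sq one_pos
  have hsum := integral_Ioi_deriv_mul_comp_mul_sub_div hr hs fun v => exp (-v ^ 2)
  have hsum_int := integrableOn_Ioi_deriv_mul_comp_mul_sub_div hr hs hgauss
  have hrφ_int : IntegrableOn (fun x => r * φ x) (Ioi 0) := by
    refine hsum_int.mono' (by fun_prop) ((ae_restrict_iff' measurableSet_Ioi).2 ?_)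
    refine Filter.Eventually.of_forall fun x (hx : 0 < x) => ?_
    rw [norm_of_nonneg (by positivity)]
    have : 0 ≤ s / x ^ 2 * φ x := by positivity
    linarith
  have hsym : ∫ x in Ioi 0, s / x ^ 2 * φ x = r * ∫ x in Ioi 0, φ x := by
    rw [← integral_Ioi_div_sq_smul_comp_div φ (div_pos hs hr), ← integral_const_mul]
    refine setIntegral_congr_fun measurableSet_Ioi fun x (hx : 0 < x) => ?_
    have hφ : φ (s / r / x) = φ x := by
      simp only [φ, ← neg_sq (r * x - s / x)]
      congr 3
      field_simp
      ring
    rw [smul_eq_mul, hφ]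
    field_simp
  have hsplit : ∫ x in Ioi 0, (r + s / x ^ 2) * φ x
      = (∫ x in Ioi 0, r * φ x) + ∫ x in Ioi 0, s / x ^ 2 * φ x := by
    have hrest : IntegrableOn (fun x => s / x ^ 2 * φ x) (Ioi 0) :=
      (hsum_int.sub hrφ_int).congr_fun (fun x _ => by simp only [Pi.sub_apply, φ]; ring)
        measurableSet_Ioi
    rw [← integral_add hrφ_int hrest]
    exact setIntegral_congr_fun measurableSet_Ioi fun x _ => by ring
  have hgauss_int : ∫ v : ℝ, exp (-v ^ 2) = √π := by simpa using integral_gaussian 1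
  rw [hsplit, integral_const_mul, hsym, hgauss_int] at hsum
  field_simp
  linarith

end CauchySchlomilch

lemma integral_Ioi_rpow_neg_half_mul_exp_neg_div_sub_mul {a b : ℝ} (ha : 0 ≤ a) (hb : 0 < b) :
    ∫ t in Ioi 0, t ^ (-(1 : ℝ) / 2) * exp (-(a ^ 2 / t) - b ^ 2 * t)
      = √π / b * exp (-(2 * a * b)) := by
  rw [← integral_comp_rpow_Ioi_of_pos two_pos]
  have hpt : ∀ x ∈ Ioi (0 : ℝ),
      (2 * x ^ ((2 : ℝ) - 1)) • ((x ^ (2 : ℝ)) ^ (-(1 : ℝ) / 2)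
        * exp (-(a ^ 2 / x ^ (2 : ℝ)) - b ^ 2 * x ^ (2 : ℝ)))
      = 2 * exp (-(2 * a * b)) * exp (-(b * x - a / x) ^ 2) := fun x (hx : 0 < x) => by
    have hexp : exp (-(a ^ 2 / x ^ 2) - b ^ 2 * x ^ 2)
        = exp (-(2 * a * b)) * exp (-(b * x - a / x) ^ 2) := by
      rw [← exp_add]
      congr 1
      field_simp
      ring
    rw [← rpow_mul hx.le, rpow_two, hexp]
    norm_num [rpow_neg_one]
    field_simp
  rw [setIntegral_congr_fun measurableSet_Ioi hpt, integral_const_mul,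
    integral_Ioi_exp_neg_sq_mul_sub_div hb ha]
  field_simp

/-- Up to constant factors, the `N(0, σ² t)` density at `c` times the `Exp(l² / 2)` density
at `t`. -/
noncomputable def normalExpMixtureKernel (l σ c t : ℝ) : ℝ :=
  t ^ (-(1 : ℝ) / 2) * exp (-(c ^ 2 / t) / (2 * σ ^ 2)) * exp (-(l ^ 2 * t) / 2)

lemma integral_Ioi_normalExpMixtureKernel {l σ : ℝ} (hl : 0 < l) (hσ : 0 < σ) (c : ℝ) :
    ∫ t in Ioi 0, normalExpMixtureKernel l σ c t
      = √(2 * π) / l * exp (-(l / σ) * |c|) := by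
  have h2 : √2 ^ 2 = 2 := sq_sqrt zero_le_two
  have key := integral_Ioi_rpow_neg_half_mul_exp_neg_div_sub_mul
    (a := |c| / (√2 * σ)) (b := l / √2) (by positivity) (by positivity)
  convert key using 1
  · refine setIntegral_congr_fun measurableSet_Ioi fun t _ => ?_
    rw [normalExpMixtureKernel, mul_assoc, ← exp_add]
    congr 2
    field_simp
    rw [sq_abs, h2]
    ring
  · have hexp : -(2 * (|c| / (√2 * σ)) * (l / √2)) = -(l / σ) * |c| := by
      field_simp
      rw [h2]
      ring
    rw [hexp, sqrt_mul zero_le_two]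
    field_simp

lemma setIntegral_univ_pi_prod {ι 𝕜 : Type*} [Fintype ι] [RCLike 𝕜] {E : ι → Type*}
    [∀ i, MeasureSpace (E i)] [∀ i, SigmaFinite (volume : Measure (E i))]
    (f : (i : ι) → E i → 𝕜) (s : (i : ι) → Set (E i)) :
    ∫ x in univ.pi s, ∏ i, f i (x i) = ∏ i, ∫ t in s i, f i t := by
  rw [volume_pi, Measure.restrict_pi_pi, integral_fintype_prod_eq_prod]

section FusedPrec

variable {p : ℕ}

lemma sum_dite_lt_pred {M : Type*} [AddCommMonoid M] (G : Fin p → Fin (p - 1) → M) :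
    ∑ i : Fin p, (if h : (i : ℕ) < p - 1 then G i ⟨i, h⟩ else 0)
      = ∑ j : Fin (p - 1), G ⟨j, by omega⟩ j := by
  cases p with
  | zero => rfl
  | succ n =>
    simp only [Nat.add_one_sub_one, Fin.sum_univ_castSucc, Fin.val_castSucc, Fin.is_lt,
      ↓reduceDIte, Fin.val_last, lt_self_iff_false, add_zero]
    rfl

lemma sum_dite_pos_pred {M : Type*} [AddCommMonoid M] (G : Fin p → Fin (p - 1) → M) :
    ∑ i : Fin p, (if h : 0 < (i : ℕ) ∧ (i : ℕ) - 1 < p - 1 then G i ⟨i - 1, h.2⟩ else 0)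
      = ∑ j : Fin (p - 1), G ⟨j + 1, by omega⟩ j := by
  cases p with
  | zero => rfl
  | succ n =>
    simp only [Nat.add_one_sub_one, Fin.sum_univ_succ, Fin.val_zero, lt_self_iff_false, false_and,
      ↓reduceDIte, Fin.val_succ, Fin.is_lt, zero_add]
    rfl

lemma fusedPrec_apply_eq_ite (τ : Fin p → ℝ) (w : Fin (p - 1) → ℝ) (i k : Fin p) :
    fusedPrec p τ w i k =
      (if k = i then fusedPrec p τ w i i else 0)
      + (if h : (i : ℕ) < p - 1 then
          if k = ⟨i + 1, by omega⟩ then -(w ⟨i, h⟩)⁻¹ else 0 else 0)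
      + (if h : 0 < (i : ℕ) ∧ (i : ℕ) - 1 < p - 1 then
          if k = ⟨i - 1, by omega⟩ then -(w ⟨i - 1, h.2⟩)⁻¹ else 0 else 0) := by
  unfold fusedPrec
  simp only [Fin.ext_iff]
  split_ifs <;> first | omega | (simp; done) | (simp only [zero_add]; congr 4)

lemma fusedPrec_mulVec_apply (τ : Fin p → ℝ) (w : Fin (p - 1) → ℝ) (β : Fin p → ℝ) (i : Fin p) :
    (fusedPrec p τ w *ᵥ β) i = β i / τ i
      + (if h : (i : ℕ) < p - 1 then (β i - β ⟨i + 1, by omega⟩) / w ⟨i, h⟩ else 0)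
      + (if h : 0 < (i : ℕ) ∧ (i : ℕ) - 1 < p - 1 then
          (β i - β ⟨i - 1, by omega⟩) / w ⟨i - 1, h.2⟩ else 0) := by
  simp only [mulVec, dotProduct]
  rw [Finset.sum_congr rfl fun k _ => by rw [fusedPrec_apply_eq_ite τ w i k]]
  simp only [add_mul, Finset.sum_add_distrib]
  by_cases h₁ : (i : ℕ) < p - 1 <;> by_cases h₂ : 0 < (i : ℕ) ∧ (i : ℕ) - 1 < p - 1 <;>
    simp only [fusedPrec, ↓reduceIte, ↓reduceDIte, h₁, h₂, and_self, add_zero, ite_mul, zero_mul,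
      neg_mul, Finset.sum_ite_eq', Finset.mem_univ, Finset.sum_const_zero] <;> ring

def fusedDiff (β : Fin p → ℝ) (j : Fin (p - 1)) : ℝ :=
  β ⟨j + 1, Nat.add_lt_of_lt_sub j.isLt⟩ - β ⟨j, j.isLt.trans_le (Nat.sub_le p 1)⟩

lemma fusedPrec_quadForm (τ : Fin p → ℝ) (w : Fin (p - 1) → ℝ) (β : Fin p → ℝ) :
    β ⬝ᵥ (fusedPrec p τ w *ᵥ β) = ∑ i, β i ^ 2 / τ i + ∑ j, fusedDiff β j ^ 2 / w j := by
  simp only [dotProduct, fusedPrec_mulVec_apply, mul_add, mul_dite, mul_zero,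
    Finset.sum_add_distrib]
  rw [sum_dite_lt_pred fun i j => β i * ((β i - β ⟨j + 1, by omega⟩) / w j),
    sum_dite_pos_pred fun i j => β i * ((β i - β ⟨j, by omega⟩) / w j),
    add_assoc, ← Finset.sum_add_distrib]
  congr 1
  · exact Finset.sum_congr rfl fun i _ => by ring
  · exact Finset.sum_congr rfl fun j _ => by rw [fusedDiff]; ring

lemma fusedPrec_isHermitian (τ : Fin p → ℝ) (w : Fin (p - 1) → ℝ) :
    (fusedPrec p τ w).IsHermitian := by
  ext i k
  rw [conjTranspose_apply, star_trivial]
  rcases eq_or_ne k i with rfl | hki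
  · rfl
  simp only [fusedPrec, Fin.ext_iff]
  split_ifs <;> first | rfl | omega

lemma fusedPrec_posDef {τ : Fin p → ℝ} {w : Fin (p - 1) → ℝ} (hτ : ∀ i, 0 < τ i)
    (hw : ∀ j, 0 < w j) : (fusedPrec p τ w).PosDef := by
  refine posDef_iff_dotProduct_mulVec.2 ⟨fusedPrec_isHermitian τ w, fun x hx => ?_⟩
  obtain ⟨i, hi⟩ : ∃ i, x i ≠ 0 := Function.ne_iff.1 hx
  rw [star_trivial, fusedPrec_quadForm]
  have hτx : 0 < ∑ i, x i ^ 2 / τ i := Finset.sum_pos'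
    (fun j _ => div_nonneg (sq_nonneg _) (hτ j).le)
    ⟨i, Finset.mem_univ i, div_pos (by positivity) (hτ i)⟩
  have hwx : 0 ≤ ∑ j, fusedDiff x j ^ 2 / w j :=
    Finset.sum_nonneg fun j _ => div_nonneg (sq_nonneg _) (hw j).le
  linarith

lemma exp_neg_fusedPrec_quadForm_div (τ : Fin p → ℝ) (w : Fin (p - 1) → ℝ) (β : Fin p → ℝ)
    (σ : ℝ) :
    exp (-(β ⬝ᵥ (fusedPrec p τ w *ᵥ β)) / (2 * σ ^ 2))
      = (∏ i, exp (-(β i ^ 2 / τ i) / (2 * σ ^ 2)))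
        * ∏ j, exp (-(fusedDiff β j ^ 2 / w j) / (2 * σ ^ 2)) := by
  simp only [fusedPrec_quadForm, ← exp_sum, ← exp_add, neg_add, add_div, Finset.sum_div,
    ← Finset.sum_neg_distrib, neg_div]

lemma fusedLasso_integrand_eq (C l1 l2 σ : ℝ) (β : Fin p → ℝ) {τ : Fin p → ℝ}
    {w : Fin (p - 1) → ℝ} (hτ : ∀ i, 0 < τ i) (hw : ∀ j, 0 < w j) :
    C * (fusedPrec p τ w).det ^ ((1 : ℝ) / 2)
        * exp (-(β ⬝ᵥ (fusedPrec p τ w *ᵥ β)) / (2 * σ ^ 2))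
        * (fusedPrec p τ w).det ^ (-(1 : ℝ) / 2)
        * (∏ i, τ i ^ (-(1 : ℝ) / 2) * exp (-(l1 ^ 2 * τ i) / 2))
        * (∏ j, w j ^ (-(1 : ℝ) / 2) * exp (-(l2 ^ 2 * w j) / 2))
      = C * ((∏ i, normalExpMixtureKernel l1 σ (β i) (τ i))
        * ∏ j, normalExpMixtureKernel l2 σ (fusedDiff β j) (w j)) := by
  have hdet : (fusedPrec p τ w).det ^ ((1 : ℝ) / 2) * (fusedPrec p τ w).det ^ (-(1 : ℝ) / 2)
      = 1 := by
    rw [← rpow_add (fusedPrec_posDef hτ hw).det_pos]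
    norm_num
  simp only [normalExpMixtureKernel, exp_neg_fusedPrec_quadForm_div, Finset.prod_mul_distrib]
  linear_combination
    (C * ((∏ i, τ i ^ (-(1 : ℝ) / 2)) * (∏ i, exp (-(β i ^ 2 / τ i) / (2 * σ ^ 2)))
      * ∏ i, exp (-(l1 ^ 2 * τ i) / 2))
      * ((∏ j, w j ^ (-(1 : ℝ) / 2)) * (∏ j, exp (-(fusedDiff β j ^ 2 / w j) / (2 * σ ^ 2)))
      * ∏ j, exp (-(l2 ^ 2 * w j) / 2))) * hdet

end FusedPrec

/-- integrating the `N_p(0, σ²Σ_{τ,w})` density of `β` against the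
(unnormalized) fused lasso prior density of `(τ², w²)` yields
`(2πσ²)^{−p/2} (√(2π)/λ₁)^p (√(2π)/λ₂)^{p−1}
exp(−(λ₁/σ)∑|βᵢ| − (λ₂/σ)∑|β_{i+1} − βᵢ|)`; consequently the marginal prior of `β`
given `σ²` is proportional to the fused lasso Laplace prior. -/
theorem fusedLasso_marginal_prior (p : ℕ) (l1 l2 σ : ℝ)
    (h1 : 0 < l1) (h2 : 0 < l2) (hσ : 0 < σ) (β : Fin p → ℝ) :
    ∫ tw : (Fin p → ℝ) × (Fin (p - 1) → ℝ) in
        {tw | (∀ i, 0 < tw.1 i) ∧ (∀ i, 0 < tw.2 i)},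
      (2 * π * σ ^ 2) ^ (-(p : ℝ) / 2) * (fusedPrec p tw.1 tw.2).det ^ ((1 : ℝ) / 2)
        * Real.exp (-(β ⬝ᵥ ((fusedPrec p tw.1 tw.2) *ᵥ β)) / (2 * σ ^ 2))
        * (fusedPrec p tw.1 tw.2).det ^ (-(1 : ℝ) / 2)
        * (∏ i, (tw.1 i) ^ (-(1 : ℝ) / 2) * Real.exp (-(l1 ^ 2 * tw.1 i) / 2))
        * (∏ i, (tw.2 i) ^ (-(1 : ℝ) / 2) * Real.exp (-(l2 ^ 2 * tw.2 i) / 2))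
      = (2 * π * σ ^ 2) ^ (-(p : ℝ) / 2)
          * (Real.sqrt (2 * π) / l1) ^ p * (Real.sqrt (2 * π) / l2) ^ (p - 1)
          * Real.exp (-(l1 / σ) * ∑ i, |β i|
              - (l2 / σ) * ∑ i : Fin (p - 1),
                  |β ⟨(i : ℕ) + 1, by have := i.isLt; omega⟩
                    - β ⟨(i : ℕ), by have := i.isLt; omega⟩|) := by
  have hS : {tw : (Fin p → ℝ) × (Fin (p - 1) → ℝ) | (∀ i, 0 < tw.1 i) ∧ ∀ i, 0 < tw.2 i}
      = (univ.pi fun _ => Ioi 0) ×ˢ (univ.pi fun _ => Ioi 0) := by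
    ext
    simp
  have hmeas : MeasurableSet (univ.pi fun _ : Fin p => Ioi (0 : ℝ)) :=
    MeasurableSet.univ_pi fun _ => measurableSet_Ioi
  rw [hS, setIntegral_congr_fun (hmeas.prod (MeasurableSet.univ_pi fun _ => measurableSet_Ioi))
      fun tw htw => fusedLasso_integrand_eq _ l1 l2 σ β (fun i => htw.1 i (mem_univ i))
        (fun j => htw.2 j (mem_univ j)),
    integral_const_mul, Measure.volume_eq_prod,
    setIntegral_prod_mul (fun t : Fin p → ℝ => ∏ i, normalExpMixtureKernel l1 σ (β i) (t i))
      fun u : Fin (p - 1) → ℝ => ∏ j, normalExpMixtureKernel l2 σ (fusedDiff β j) (u j),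
    setIntegral_univ_pi_prod, setIntegral_univ_pi_prod]
  simp only [integral_Ioi_normalExpMixtureKernel h1 hσ, integral_Ioi_normalExpMixtureKernel h2 hσ,
    Finset.prod_mul_distrib, Finset.prod_const, Finset.card_univ, Fintype.card_fin, ← exp_sum,
    ← Finset.mul_sum]
  rw [sub_eq_add_neg, exp_add, ← neg_mul]
  simp only [fusedDiff]
  ring
end

section
/- Small-set bounds for the Bayesian fused lasso. Let p ≥ 2, y ∈ ℝⁿ, X a real n×p matrix, λ₁, λ₂ > 0 and d > 0. Suppose β ∈ ℝᵖ, τ² ∈ (0,∞)ᵖ, w² ∈ (0,∞)^{p−1} satisfy (y − Xβ)ᵀ(y − Xβ) + ∑_{i=1}^p βᵢ²/τ²ᵢ + ∑_{i=1}^{p−1} (β_{i+1} − βᵢ)²/w²ᵢ + (λ₁²/4)∑_{i=1}^p τ²ᵢ + (λ₂²/4)∑_{i=1}^{p−1} w²ᵢ ≤ d. Then for every j = 1,…,p, βⱼ² ≤ 4d²/λ₁², and for every j = 1,…,p−1, (β_{j+1} − βⱼ)² ≤ 4d²/λ₂². -/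
open Matrix

lemma aux_bound {a t d l : ℝ} (hl : 0 < l) (ht : 0 < t) (hd : 0 < d)
    (h1 : a ^ 2 / t ≤ d) (h2 : l ^ 2 / 4 * t ≤ d) :
    a ^ 2 ≤ 4 * d ^ 2 / l ^ 2 := by
  have hl2 : (0:ℝ) < l ^ 2 := by positivity
  have ht' : t ≤ 4 * d / l ^ 2 := by
    rw [le_div_iff₀ hl2]
    nlinarith
  have : a ^ 2 ≤ d * t := by
    have := (div_le_iff₀ ht).mp h1
    linarith
  calc a ^ 2 ≤ d * t := this
    _ ≤ d * (4 * d / l ^ 2) := by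
        exact mul_le_mul_of_nonneg_left ht' hd.le
    _ = 4 * d ^ 2 / l ^ 2 := by ring

/-- small-set bounds for the Bayesian fused lasso. If
`(y−Xβ)ᵀ(y−Xβ) + ∑βᵢ²/τ²ᵢ + ∑(β_{i+1}−βᵢ)²/w²ᵢ + (λ₁²/4)∑τ²ᵢ + (λ₂²/4)∑w²ᵢ ≤ d`
then `βⱼ² ≤ 4d²/λ₁²` for every `j`, and `(β_{j+1}−βⱼ)² ≤ 4d²/λ₂²` for every `j`. -/
theorem fusedLasso_small_set_bounds (n p : ℕ) (hp : 2 ≤ p) (y : Fin n → ℝ)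
    (X : Matrix (Fin n) (Fin p) ℝ) (l1 l2 d : ℝ) (h1 : 0 < l1) (h2 : 0 < l2)
    (hd : 0 < d) (β τ : Fin p → ℝ) (w : Fin (p - 1) → ℝ)
    (hτ : ∀ i, 0 < τ i) (hw : ∀ i, 0 < w i)
    (hbound : (y - X *ᵥ β) ⬝ᵥ (y - X *ᵥ β)
        + ∑ i, β i ^ 2 / τ i
        + ∑ i : Fin (p - 1),
            (β ⟨(i : ℕ) + 1, by have := i.isLt; omega⟩
              - β ⟨(i : ℕ), by have := i.isLt; omega⟩) ^ 2 / w i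
        + l1 ^ 2 / 4 * ∑ i, τ i + l2 ^ 2 / 4 * ∑ i, w i ≤ d) :
    (∀ j, β j ^ 2 ≤ 4 * d ^ 2 / l1 ^ 2) ∧
    (∀ j : Fin (p - 1),
        (β ⟨(j : ℕ) + 1, by have := j.isLt; omega⟩
          - β ⟨(j : ℕ), by have := j.isLt; omega⟩) ^ 2 ≤ 4 * d ^ 2 / l2 ^ 2) := by
  have hS0 : 0 ≤ (y - X *ᵥ β) ⬝ᵥ (y - X *ᵥ β) :=
    Finset.sum_nonneg fun i _ => mul_self_nonneg _
  have hS1 : ∀ j, 0 ≤ β j ^ 2 / τ j := fun j => div_nonneg (sq_nonneg _) (hτ j).le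
  have hS2 : ∀ j : Fin (p-1),
      0 ≤ (β ⟨(j : ℕ) + 1, by have := j.isLt; omega⟩
            - β ⟨(j : ℕ), by have := j.isLt; omega⟩) ^ 2 / w j := fun j => div_nonneg (sq_nonneg _) (hw j).le
  have hsum1 : 0 ≤ ∑ i, β i ^ 2 / τ i := Finset.sum_nonneg fun i _ => hS1 i
  have hsum2 : 0 ≤ ∑ i : Fin (p-1),
      (β ⟨(i : ℕ) + 1, by have := i.isLt; omega⟩
        - β ⟨(i : ℕ), by have := i.isLt; omega⟩) ^ 2 / w i :=
    Finset.sum_nonneg fun i _ => hS2 i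
  have hsum3 : 0 ≤ l1 ^ 2 / 4 * ∑ i, τ i := by
    have : 0 ≤ ∑ i, τ i := Finset.sum_nonneg fun i _ => (hτ i).le
    positivity
  have hsum4 : 0 ≤ l2 ^ 2 / 4 * ∑ i, w i := by
    have : 0 ≤ ∑ i, w i := Finset.sum_nonneg fun i _ => (hw i).le
    positivity
  constructor
  · intro j
    have hterm1 : β j ^ 2 / τ j ≤ d := by
      have h := Finset.single_le_sum (f := fun i => β i ^ 2 / τ i)
        (fun i _ => hS1 i) (Finset.mem_univ j)
      linarith
    have hterm3 : l1 ^ 2 / 4 * τ j ≤ d := by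
      have h := Finset.single_le_sum (f := fun i => τ i)
        (fun i _ => (hτ i).le) (Finset.mem_univ j)
      have : l1 ^ 2 / 4 * τ j ≤ l1 ^ 2 / 4 * ∑ i, τ i := by
        apply mul_le_mul_of_nonneg_left h; positivity
      linarith
    exact aux_bound h1 (hτ j) hd hterm1 hterm3
  · intro j
    have hterm2 : (β ⟨(j : ℕ) + 1, by have := j.isLt; omega⟩
        - β ⟨(j : ℕ), by have := j.isLt; omega⟩) ^ 2 / w j ≤ d := by
      have h := Finset.single_le_sum (f := fun i : Fin (p-1) =>
        (β ⟨(i : ℕ) + 1, by have := i.isLt; omega⟩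
          - β ⟨(i : ℕ), by have := i.isLt; omega⟩) ^ 2 / w i)
        (fun i _ => hS2 i) (Finset.mem_univ j)
      linarith
    have hterm4 : l2 ^ 2 / 4 * w j ≤ d := by
      have h := Finset.single_le_sum (f := fun i => w i)
        (fun i _ => (hw i).le) (Finset.mem_univ j)
      have : l2 ^ 2 / 4 * w j ≤ l2 ^ 2 / 4 * ∑ i, w i := by
        apply mul_le_mul_of_nonneg_left h; positivity
      linarith
    exact aux_bound h2 (hw j) hd hterm2 hterm4
end
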